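/- Let X be a cluster-tilting subcategory of a triangulated category C with split idempotents. Then every morphism of the quotient category C/X admits both a kernel and a cokernel in C/X. -/

import Mathlib

open CategoryTheory CategoryTheory.Limits CategoryTheory.Pretriangulated

universe v u

variable {C : Type u} [Category.{v} C] [Preadditive C] [HasZeroObject C]
  [HasShift C ℤ] [∀ n : ℤ, (shiftFunctor C n).Additive] [Pretriangulated C]

/-- `f` factors through an object satisfying `X`. -/
def FactorsThru (X : C → Prop) {A B : C} (f : A ⟶ B) : Prop :=
  ∃ (X₀ : C) (g : A ⟶ X₀) (h : X₀ ⟶ B), X X₀ ∧ g ≫ h = f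

/-- The hom relation on `C` identifying two morphisms when their difference factors
through an object of `X`; the quotient category `C/X` is the quotient by this relation. -/
def homRelOf (X : C → Prop) : HomRel C :=
  fun {A B : C} (f g : A ⟶ B) => FactorsThru X (f - g)

/-- The additive quotient category `C/X`. -/
abbrev QuotCat (X : C → Prop) := CategoryTheory.Quotient (homRelOf X)

/-- The quotient functor `C ⥤ C/X`, sending a morphism `f` to its class `f̄`. -/
abbrev quotFunctor (X : C → Prop) : C ⥤ QuotCat X := Quotient.functor _

/-- `X` is a full additive subcategory: it contains the zero objects and is closed under
isomorphisms, finite direct sums and direct summands. -/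
structure IsAdditiveClosed (X : C → Prop) : Prop where
  zero : ∀ Z : C, IsZero Z → X Z
  iso : ∀ {A B : C}, (A ≅ B) → X A → X B
  biprod : ∀ {A B : C} (b : BinaryBicone A B), Nonempty b.IsBilimit → X A → X B → X b.pt
  summand : ∀ {A B : C} (i : A ⟶ B) (p : B ⟶ A), i ≫ p = 𝟙 A → X B → X A

/-- `X` is a cluster-tilting subcategory of the triangulated category `C`:
it is a full additive subcategory such that (i) `Hom(X₁, ΣX₂) = 0` for all `X₁, X₂ ∈ X`, and
(ii) every object `A` fits into a distinguished triangle `X₀ ⟶ X₁ ⟶ A ⟶ ΣX₀` with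
`X₀, X₁ ∈ X`. -/
structure IsClusterTilting (X : C → Prop) extends IsAdditiveClosed X : Prop where
  hom_shift_zero : ∀ {X₁ X₂ : C}, X X₁ → X X₂ → ∀ f : X₁ ⟶ X₂⟦(1 : ℤ)⟧, f = 0
  exists_triangle : ∀ A : C, ∃ (X₀ X₁ : C) (f : X₀ ⟶ X₁) (g : X₁ ⟶ A) (h : A ⟶ X₀⟦(1 : ℤ)⟧),
    X X₀ ∧ X X₁ ∧ Triangle.mk f g h ∈ distTriang C

/-- `f : A ⟶ B` is `X`-monic: every morphism from `A` to an object of `X` factors through `f`. -/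
def XMonic (X : C → Prop) {A B : C} (f : A ⟶ B) : Prop :=
  ∀ X' : C, X X' → ∀ u : A ⟶ X', ∃ v : B ⟶ X', f ≫ v = u

/-- `f : A ⟶ B` is `X`-epic: every morphism from an object of `X` to `B` factors through `f`. -/
def XEpic (X : C → Prop) {A B : C} (f : A ⟶ B) : Prop :=
  ∀ X' : C, X X' → ∀ u : X' ⟶ B, ∃ v : X' ⟶ A, v ≫ f = u

/-!
For `f : A ⟶ B` choose a right `X`-approximation `β : B₁ ⟶ B` and complete
`(f, β) : A ⊞ B₁ ⟶ B` to a distinguished triangle `K ⟶ A ⊞ B₁ ⟶ B ⟶ K⟦1⟧`; the component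
`K ⟶ A` is a kernel of `f̄` in `C/X`. Dually, for a left `X`-approximation `α : A ⟶ W₀`, the
map from `B` to the cone of `(f, α) : A ⟶ B ⊞ W₀` is a cokernel of `f̄`. Uniqueness of the
induced maps comes from a description of the ideal of morphisms factoring through `X`:
`e : Z ⟶ Y` factors through `X` iff `e ≫ t = 0` for all `t : Y ⟶ W⟦1⟧` with `W ∈ X`, iff
`t ≫ e⟦1⟧' = 0` for all `t : W ⟶ Z⟦1⟧` with `W ∈ X`.
-/

variable {X : C → Prop}

section IdealOfMorphisms

omit [HasZeroObject C] [HasShift C ℤ] [∀ n : ℤ, (shiftFunctor C n).Additive] [Pretriangulated C]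

section

omit [Preadditive C]

lemma factorsThru_of_mem {A W B : C} (hW : X W) (g : A ⟶ W) (h : W ⟶ B) :
    FactorsThru X (g ≫ h) :=
  ⟨W, g, h, hW, rfl⟩

lemma FactorsThru.comp_left {A B D : C} {f : B ⟶ D} (hf : FactorsThru X f) (g : A ⟶ B) :
    FactorsThru X (g ≫ f) := by
  obtain ⟨W, a, b, hW, rfl⟩ := hf
  exact ⟨W, g ≫ a, b, hW, Category.assoc _ _ _⟩

lemma FactorsThru.comp_right {A B D : C} {f : A ⟶ B} (hf : FactorsThru X f) (g : B ⟶ D) :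
    FactorsThru X (f ≫ g) := by
  obtain ⟨W, a, b, hW, rfl⟩ := hf
  exact ⟨W, a, b ≫ g, hW, (Category.assoc _ _ _).symm⟩

end

lemma FactorsThru.neg {A B : C} {f : A ⟶ B} (hf : FactorsThru X f) : FactorsThru X (-f) := by
  obtain ⟨W, g, h, hW, rfl⟩ := hf
  exact ⟨W, -g, h, hW, Preadditive.neg_comp _ _⟩

variable [HasBinaryBiproducts C]

lemma IsAdditiveClosed.mem_biprod (hX : IsAdditiveClosed X) {A B : C} (hA : X A) (hB : X B) :
    X (A ⊞ B) :=
  hX.biprod (BinaryBiproduct.bicone A B) ⟨BinaryBiproduct.isBilimit A B⟩ hA hB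

lemma FactorsThru.add (hX : IsAdditiveClosed X) {A B : C} {f f' : A ⟶ B}
    (hf : FactorsThru X f) (hf' : FactorsThru X f') : FactorsThru X (f + f') := by
  obtain ⟨W, g, h, hW, rfl⟩ := hf
  obtain ⟨W', g', h', hW', rfl⟩ := hf'
  exact ⟨W ⊞ W', biprod.lift g g', biprod.desc h h', hX.mem_biprod hW hW', biprod.lift_desc⟩

end IdealOfMorphisms

section AdditiveQuotient

omit [HasShift C ℤ] [∀ n : ℤ, (shiftFunctor C n).Additive] [Pretriangulated C]

lemma factorsThru_zero (hX : IsAdditiveClosed X) (A B : C) : FactorsThru X (0 : A ⟶ B) := by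
  obtain ⟨Z, hZ⟩ := HasZeroObject.zero (C := C)
  exact ⟨Z, 0, 0, hX.zero Z hZ, comp_zero⟩

variable [HasBinaryBiproducts C]

lemma congruence_homRelOf (hX : IsAdditiveClosed X) : Congruence (homRelOf X) where
  equivalence :=
    { refl := fun f => by simpa [homRelOf] using factorsThru_zero hX _ _
      symm := fun h => by simpa [homRelOf] using FactorsThru.neg h
      trans := fun h₁ h₂ => by simpa [homRelOf] using h₁.add hX h₂ }
  comp_left f _ _ h := by simpa [homRelOf, Preadditive.comp_sub] using FactorsThru.comp_left h f
  comp_right g h := by simpa [homRelOf, Preadditive.sub_comp] using FactorsThru.comp_right h g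

lemma quotFunctor_map_eq_iff (hX : IsAdditiveClosed X) {A B : C} (f g : A ⟶ B) :
    (quotFunctor X).map f = (quotFunctor X).map g ↔ FactorsThru X (f - g) :=
  have := congruence_homRelOf hX
  Quotient.functor_map_eq_iff (homRelOf X) f g

lemma quotFunctor_map_eq_zero_iff (hX : IsAdditiveClosed X) {A B : C} (f : A ⟶ B) :
    (quotFunctor X).map f = (quotFunctor X).map (0 : A ⟶ B) ↔ FactorsThru X f := by
  rw [quotFunctor_map_eq_iff hX, sub_zero]

def IsQuotKernel (X : C → Prop) {K A B : C} (k : (quotFunctor X).obj K ⟶ (quotFunctor X).obj A)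
    (φ : (quotFunctor X).obj A ⟶ (quotFunctor X).obj B) : Prop :=
  k ≫ φ = (quotFunctor X).map (0 : K ⟶ B) ∧
    ∀ (Z : C) (u : (quotFunctor X).obj Z ⟶ (quotFunctor X).obj A),
      u ≫ φ = (quotFunctor X).map (0 : Z ⟶ B) →
      ∃! v : (quotFunctor X).obj Z ⟶ (quotFunctor X).obj K, v ≫ k = u

def IsQuotCokernel (X : C → Prop) {A B Q : C} (φ : (quotFunctor X).obj A ⟶ (quotFunctor X).obj B)
    (q : (quotFunctor X).obj B ⟶ (quotFunctor X).obj Q) : Prop :=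
  φ ≫ q = (quotFunctor X).map (0 : A ⟶ Q) ∧
    ∀ (Z : C) (u : (quotFunctor X).obj B ⟶ (quotFunctor X).obj Z),
      φ ≫ u = (quotFunctor X).map (0 : A ⟶ Z) →
      ∃! v : (quotFunctor X).obj Q ⟶ (quotFunctor X).obj Z, q ≫ v = u

variable (hX : IsAdditiveClosed X)
include hX

lemma isQuotKernel_map {K A B : C} {k : K ⟶ A} {f : A ⟶ B}
    (hzero : FactorsThru X (k ≫ f))
    (hlift : ∀ (Z : C) (u : Z ⟶ A), FactorsThru X (u ≫ f) → ∃ v, v ≫ k = u)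
    (hmono : ∀ (Z : C) (v : Z ⟶ K), FactorsThru X (v ≫ k) → FactorsThru X v) :
    IsQuotKernel X ((quotFunctor X).map k) ((quotFunctor X).map f) := by
  refine ⟨by rwa [← Functor.map_comp, quotFunctor_map_eq_zero_iff hX], fun Z u hu => ?_⟩
  obtain ⟨u, rfl⟩ := (quotFunctor X).map_surjective u
  rw [← Functor.map_comp, quotFunctor_map_eq_zero_iff hX] at hu
  obtain ⟨v, rfl⟩ := hlift Z u hu
  refine ⟨(quotFunctor X).map v, ((quotFunctor X).map_comp v k).symm, fun v' hv' => ?_⟩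
  obtain ⟨v', rfl⟩ := (quotFunctor X).map_surjective v'
  rw [← Functor.map_comp, quotFunctor_map_eq_iff hX, ← Preadditive.sub_comp] at hv'
  exact (quotFunctor_map_eq_iff hX _ _).2 (hmono Z _ hv')

lemma isQuotCokernel_map {A B Q : C} {f : A ⟶ B} {q : B ⟶ Q}
    (hzero : FactorsThru X (f ≫ q))
    (hdesc : ∀ (Z : C) (u : B ⟶ Z), FactorsThru X (f ≫ u) → ∃ v, q ≫ v = u)
    (hepi : ∀ (Z : C) (v : Q ⟶ Z), FactorsThru X (q ≫ v) → FactorsThru X v) :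
    IsQuotCokernel X ((quotFunctor X).map f) ((quotFunctor X).map q) := by
  refine ⟨by rwa [← Functor.map_comp, quotFunctor_map_eq_zero_iff hX], fun Z u hu => ?_⟩
  obtain ⟨u, rfl⟩ := (quotFunctor X).map_surjective u
  rw [← Functor.map_comp, quotFunctor_map_eq_zero_iff hX] at hu
  obtain ⟨v, rfl⟩ := hdesc Z u hu
  refine ⟨(quotFunctor X).map v, ((quotFunctor X).map_comp q v).symm, fun v' hv' => ?_⟩
  obtain ⟨v', rfl⟩ := (quotFunctor X).map_surjective v'
  rw [← Functor.map_comp, quotFunctor_map_eq_iff hX, ← Preadditive.comp_sub] at hv'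
  exact (quotFunctor_map_eq_iff hX _ _).2 (hepi Z _ hv')

end AdditiveQuotient

namespace IsClusterTilting

variable (hX : IsClusterTilting X)
include hX

lemma exists_xEpic (B : C) : ∃ (B₁ : C) (β : B₁ ⟶ B), X B₁ ∧ XEpic X β := by
  obtain ⟨B₀, B₁, a, β, c, hB₀, hB₁, hT⟩ := hX.exists_triangle B
  refine ⟨B₁, β, hB₁, fun W hW u => ?_⟩
  obtain ⟨v, hv⟩ := Triangle.coyoneda_exact₃ _ hT u (hX.hom_shift_zero hW hB₀ _)
  exact ⟨v, hv.symm⟩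

lemma exists_xMonic (A : C) : ∃ (W₀ : C) (α : A ⟶ W₀), X W₀ ∧ XMonic X α := by
  obtain ⟨W₀, W₁, a, b, c, hW₀, hW₁, hT⟩ := hX.exists_triangle (A⟦(1 : ℤ)⟧)
  refine ⟨W₀, (shiftFunctor C (1 : ℤ)).preimage c, hW₀, fun W hW u => ?_⟩
  obtain ⟨g, hg⟩ : ∃ g : W₀⟦(1 : ℤ)⟧ ⟶ W⟦(1 : ℤ)⟧, u⟦(1 : ℤ)⟧' = c ≫ g :=
    Triangle.yoneda_exact₃ _ hT _ (hX.hom_shift_zero hW₁ hW _)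
  refine ⟨(shiftFunctor C (1 : ℤ)).preimage g, (shiftFunctor C (1 : ℤ)).map_injective ?_⟩
  rw [Functor.map_comp, Functor.map_preimage, Functor.map_preimage, hg]

lemma factorsThru_iff_forall_comp_eq_zero {Z Y : C} (e : Z ⟶ Y) :
    FactorsThru X e ↔ ∀ W : C, X W → ∀ t : Y ⟶ W⟦(1 : ℤ)⟧, e ≫ t = 0 := by
  refine ⟨fun ⟨W', g, h, hW', he⟩ W hW t => ?_, fun H => ?_⟩
  · rw [← he, Category.assoc, hX.hom_shift_zero hW' hW (h ≫ t), comp_zero]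
  · obtain ⟨Y₀, Y₁, a, γ, δ, hY₀, hY₁, hT⟩ := hX.exists_triangle Y
    obtain ⟨s, hs⟩ := Triangle.coyoneda_exact₃ _ hT e (H Y₀ hY₀ δ)
    exact ⟨Y₁, s, γ, hY₁, hs.symm⟩

lemma factorsThru_iff_forall_comp_shift_eq_zero {Z Y : C} (e : Z ⟶ Y) :
    FactorsThru X e ↔ ∀ W : C, X W → ∀ t : W ⟶ Z⟦(1 : ℤ)⟧, t ≫ e⟦(1 : ℤ)⟧' = 0 := by
  refine ⟨fun ⟨W', g, h, hW', he⟩ W hW t => ?_, fun H => ?_⟩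
  · rw [← he, Functor.map_comp, ← Category.assoc, hX.hom_shift_zero hW hW' (t ≫ g⟦1⟧'),
      zero_comp]
  · obtain ⟨W₀, W₁, a, b, c, hW₀, hW₁, hT⟩ := hX.exists_triangle (Z⟦(1 : ℤ)⟧)
    obtain ⟨g, hg⟩ : ∃ g : W₀⟦(1 : ℤ)⟧ ⟶ Y⟦(1 : ℤ)⟧, e⟦(1 : ℤ)⟧' = c ≫ g :=
      Triangle.yoneda_exact₃ _ hT _ (H W₁ hW₁ b)
    refine ⟨W₀, (shiftFunctor C (1 : ℤ)).preimage c, (shiftFunctor C (1 : ℤ)).preimage g, hW₀,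
      (shiftFunctor C (1 : ℤ)).map_injective ?_⟩
    rw [Functor.map_comp, Functor.map_preimage, Functor.map_preimage, hg]

end IsClusterTilting

section Kernel

variable {A B B₁ K : C} {f : A ⟶ B} {β : B₁ ⟶ B} {d : K ⟶ A ⊞ B₁} {h : B ⟶ K⟦(1 : ℤ)⟧}

lemma factorsThru_comp_fst_comp (hB₁ : X B₁) (hd : d ≫ biprod.desc f β = 0) :
    FactorsThru X ((d ≫ biprod.fst) ≫ f) := by
  have : (d ≫ biprod.fst) ≫ f = -((d ≫ biprod.snd) ≫ β) := by
    rw [eq_neg_iff_add_eq_zero, ← hd, biprod.desc_eq]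
    simp only [Preadditive.comp_add, Category.assoc]
  rw [this]
  exact (factorsThru_of_mem hB₁ _ β).neg

variable (hT : Triangle.mk d (biprod.desc f β) h ∈ distTriang C)
include hT

lemma exists_comp_fst_eq (hβ : XEpic X β) {Z : C} (u : Z ⟶ A) (hu : FactorsThru X (u ≫ f)) :
    ∃ v : Z ⟶ K, v ≫ d ≫ biprod.fst = u := by
  obtain ⟨W, s, t, hW, hst⟩ := hu
  obtain ⟨t', rfl⟩ := hβ W hW t
  obtain ⟨v, hv⟩ : ∃ v : Z ⟶ K, biprod.lift u (-(s ≫ t')) = v ≫ d :=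
    Triangle.coyoneda_exact₂ _ hT _ (by
      rw [biprod.lift_desc, Preadditive.neg_comp, Category.assoc, hst, add_neg_cancel] :
        biprod.lift u (-(s ≫ t')) ≫ biprod.desc f β = 0)
  exact ⟨v, by rw [← Category.assoc, ← hv, biprod.lift_fst]⟩

lemma factorsThru_of_factorsThru_comp_fst (hX : IsClusterTilting X) (hB₁ : X B₁)
    (hβ : XEpic X β) {Z : C} (v : Z ⟶ K) (hv : FactorsThru X (v ≫ d ≫ biprod.fst)) :
    FactorsThru X v := by
  have hvd : FactorsThru X (v ≫ d) := by
    rw [← Category.comp_id (v ≫ d), ← biprod.total, Preadditive.comp_add]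
    simp only [← Category.assoc] at hv ⊢
    exact (hv.comp_right _).add hX.toIsAdditiveClosed (factorsThru_of_mem hB₁ _ _)
  rw [hX.factorsThru_iff_forall_comp_shift_eq_zero] at hvd ⊢
  intro W hW t
  obtain ⟨w, hw⟩ : ∃ w : W ⟶ B, t ≫ v⟦(1 : ℤ)⟧' = w ≫ h :=
    Triangle.coyoneda_exact₁ _ hT _ (by
      rw [Category.assoc, ← Functor.map_comp]; exact hvd W hW t : (t ≫ v⟦(1 : ℤ)⟧') ≫ d⟦1⟧' = 0)
  obtain ⟨w', rfl⟩ := hβ W hW w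
  have hβh : β ≫ h = 0 := by
    have hdesc : biprod.desc f β ≫ h = 0 := comp_distTriang_mor_zero₂₃ _ hT
    rw [← biprod.inr_desc f β, Category.assoc, hdesc, comp_zero]
  rw [hw, Category.assoc, hβh, comp_zero]

lemma isQuotKernel_of_distTriang (hX : IsClusterTilting X) (hB₁ : X B₁) (hβ : XEpic X β) :
    IsQuotKernel X ((quotFunctor X).map (d ≫ biprod.fst)) ((quotFunctor X).map f) :=
  isQuotKernel_map hX.toIsAdditiveClosed
    (factorsThru_comp_fst_comp hB₁ (comp_distTriang_mor_zero₁₂ _ hT))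
    (fun _ => exists_comp_fst_eq hT hβ)
    (fun _ => factorsThru_of_factorsThru_comp_fst hT hX hB₁ hβ)

end Kernel

section Cokernel

variable {A B W₀ Q : C} {f : A ⟶ B} {α : A ⟶ W₀} {g : B ⊞ W₀ ⟶ Q} {h : Q ⟶ A⟦(1 : ℤ)⟧}

lemma factorsThru_comp_inl_comp (hW₀ : X W₀) (hg : biprod.lift f α ≫ g = 0) :
    FactorsThru X (f ≫ biprod.inl ≫ g) := by
  have : f ≫ biprod.inl ≫ g = -(α ≫ biprod.inr ≫ g) := by
    rw [eq_neg_iff_add_eq_zero, ← hg, biprod.lift_eq]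
    simp only [Preadditive.add_comp, Category.assoc]
  rw [this]
  exact (factorsThru_of_mem hW₀ α _).neg

variable (hT : Triangle.mk (biprod.lift f α) g h ∈ distTriang C)
include hT

lemma exists_inl_comp_eq (hα : XMonic X α) {Z : C} (u : B ⟶ Z) (hu : FactorsThru X (f ≫ u)) :
    ∃ v : Q ⟶ Z, (biprod.inl ≫ g) ≫ v = u := by
  obtain ⟨W, s, t, hW, hst⟩ := hu
  obtain ⟨s', rfl⟩ := hα W hW s
  obtain ⟨v, hv⟩ : ∃ v : Q ⟶ Z, biprod.desc u (-(s' ≫ t)) = g ≫ v :=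
    Triangle.yoneda_exact₂ _ hT _ (by
      rw [biprod.lift_desc, Preadditive.comp_neg, ← Category.assoc, hst, add_neg_cancel] :
        biprod.lift f α ≫ biprod.desc u (-(s' ≫ t)) = 0)
  exact ⟨v, by rw [Category.assoc, ← hv, biprod.inl_desc]⟩

lemma factorsThru_of_factorsThru_inl_comp (hX : IsClusterTilting X) (hW₀ : X W₀)
    (hα : XMonic X α) {Z : C} (v : Q ⟶ Z) (hv : FactorsThru X ((biprod.inl ≫ g) ≫ v)) :
    FactorsThru X v := by
  have hgv : FactorsThru X (g ≫ v) := by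
    rw [← Category.id_comp (g ≫ v), ← biprod.total, Preadditive.add_comp]
    simp only [Category.assoc] at hv ⊢
    exact (hv.comp_left _).add hX.toIsAdditiveClosed (factorsThru_of_mem hW₀ _ _)
  rw [hX.factorsThru_iff_forall_comp_eq_zero] at hgv ⊢
  intro W hW t
  obtain ⟨w, hw⟩ : ∃ w : A⟦(1 : ℤ)⟧ ⟶ W⟦(1 : ℤ)⟧, v ≫ t = h ≫ w :=
    Triangle.yoneda_exact₃ _ hT _ (by rw [← Category.assoc]; exact hgv W hW t : g ≫ v ≫ t = 0)
  obtain ⟨w', hw'⟩ := hα W hW ((shiftFunctor C (1 : ℤ)).preimage w)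
  have hhα : h ≫ α⟦(1 : ℤ)⟧' = 0 := by
    have hlift : h ≫ (biprod.lift f α)⟦(1 : ℤ)⟧' = 0 := comp_distTriang_mor_zero₃₁ _ hT
    rw [← biprod.lift_snd f α, Functor.map_comp, ← Category.assoc, hlift, zero_comp]
  rw [hw, ← (shiftFunctor C (1 : ℤ)).map_preimage w, ← hw', Functor.map_comp,
    ← Category.assoc, hhα, zero_comp]

lemma isQuotCokernel_of_distTriang (hX : IsClusterTilting X) (hW₀ : X W₀) (hα : XMonic X α) :
    IsQuotCokernel X ((quotFunctor X).map f) ((quotFunctor X).map (biprod.inl ≫ g)) :=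
  isQuotCokernel_map hX.toIsAdditiveClosed
    (factorsThru_comp_inl_comp hW₀ (comp_distTriang_mor_zero₁₂ _ hT))
    (fun _ => exists_inl_comp_eq hT hα)
    (fun _ => factorsThru_of_factorsThru_inl_comp hT hX hW₀ hα)

end Cokernel

theorem has_kernel_and_cokernel_general
    (X : C → Prop) (hX : IsClusterTilting X)
    (A B : C) (φ : (quotFunctor X).obj A ⟶ (quotFunctor X).obj B) :
    (∃ (K : C) (k : (quotFunctor X).obj K ⟶ (quotFunctor X).obj A),
      k ≫ φ = (quotFunctor X).map (0 : K ⟶ B) ∧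
      ∀ (Z : C) (u : (quotFunctor X).obj Z ⟶ (quotFunctor X).obj A),
        u ≫ φ = (quotFunctor X).map (0 : Z ⟶ B) →
        ∃! v : (quotFunctor X).obj Z ⟶ (quotFunctor X).obj K, v ≫ k = u) ∧
    (∃ (Q : C) (q : (quotFunctor X).obj B ⟶ (quotFunctor X).obj Q),
      φ ≫ q = (quotFunctor X).map (0 : A ⟶ Q) ∧
      ∀ (Z : C) (u : (quotFunctor X).obj B ⟶ (quotFunctor X).obj Z),
        φ ≫ u = (quotFunctor X).map (0 : A ⟶ Z) →
        ∃! v : (quotFunctor X).obj Q ⟶ (quotFunctor X).obj Z, q ≫ v = u) := by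
  obtain ⟨f, rfl⟩ := (quotFunctor X).map_surjective φ
  obtain ⟨B₁, β, hB₁, hβ⟩ := hX.exists_xEpic B
  obtain ⟨K, d, h, hK⟩ := distinguished_cocone_triangle₁ (biprod.desc f β)
  obtain ⟨W₀, α, hW₀, hα⟩ := hX.exists_xMonic A
  obtain ⟨Q, g, h', hQ⟩ := distinguished_cocone_triangle (biprod.lift f α)
  exact ⟨⟨K, _, isQuotKernel_of_distTriang hK hX hB₁ hβ⟩,
    ⟨Q, _, isQuotCokernel_of_distTriang hQ hX hW₀ hα⟩⟩

/-- Every morphism of the quotient category `C/X` by a cluster-tilting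
subcategory `X` admits both a kernel and a cokernel in `C/X`. -/
theorem has_kernel_and_cokernel [IsIdempotentComplete C]
    (X : C → Prop) (hX : IsClusterTilting X)
    (A B : C) (φ : (quotFunctor X).obj A ⟶ (quotFunctor X).obj B) :
    (∃ (K : C) (k : (quotFunctor X).obj K ⟶ (quotFunctor X).obj A),
      k ≫ φ = (quotFunctor X).map (0 : K ⟶ B) ∧
      ∀ (Z : C) (u : (quotFunctor X).obj Z ⟶ (quotFunctor X).obj A),
        u ≫ φ = (quotFunctor X).map (0 : Z ⟶ B) →
        ∃! v : (quotFunctor X).obj Z ⟶ (quotFunctor X).obj K, v ≫ k = u) ∧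
    (∃ (Q : C) (q : (quotFunctor X).obj B ⟶ (quotFunctor X).obj Q),
      φ ≫ q = (quotFunctor X).map (0 : A ⟶ Q) ∧
      ∀ (Z : C) (u : (quotFunctor X).obj B ⟶ (quotFunctor X).obj Z),
        φ ≫ u = (quotFunctor X).map (0 : A ⟶ Z) →
        ∃! v : (quotFunctor X).obj Q ⟶ (quotFunctor X).obj Z, q ≫ v = u) :=
  has_kernel_and_cokernel_general X hX A B φ
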